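/- arXiv:1807.05023 — 4 statements merged into one kernel-verified Lean document; each statement's English description precedes it below -/
import Mathlib

section
/- A subset A of ℝ^d is contained in some affine hyperplane if and only if the infimum over ε > 0 such that A is contained in the open ε-neighborhood of some affine hyperplane is 0. -/
/-!
If the `ε`-thickening of the hyperplane `⟪v, x⟫ = c` contains `A`, normalise `‖v‖ = 1` and
measure from a fixed point `a ∈ A`: then `|⟪v, x - a⟫| ≤ 2ε` on `A`. The unit vectors satisfying
this bound form nonempty closed subsets of the compact unit sphere, shrinking as `ε ↓ 0`, so some
unit vector lies in all of them and is orthogonal to every `x - a` with `x ∈ A`.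
-/

open Metric

open scoped RealInnerProductSpace

variable {E : Type*} [NormedAddCommGroup E] [InnerProductSpace ℝ E]

lemma abs_inner_sub_le_of_mem_thickening {v x : E} {c ε : ℝ}
    (hx : x ∈ thickening ε {y | ⟪v, y⟫ = c}) : |⟪v, x⟫ - c| ≤ ‖v‖ * ε := by
  obtain ⟨y, hy, hxy⟩ := mem_thickening_iff.mp hx
  rw [← show ⟪v, y⟫ = c from hy, ← inner_sub_right]
  calc |⟪v, x - y⟫| ≤ ‖v‖ * ‖x - y‖ := abs_real_inner_le_norm v (x - y)
    _ ≤ ‖v‖ * ε := by gcongr; rw [← dist_eq_norm]; exact hxy.le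

lemma abs_inner_normalize_sub_le_of_subset_thickening {A : Set E} {a v : E} {c ε : ℝ}
    (ha : a ∈ A) (hv : v ≠ 0) (hA : A ⊆ thickening ε {y | ⟪v, y⟫ = c}) :
    ∀ x ∈ A, |⟪‖v‖⁻¹ • v, x - a⟫| ≤ 2 * ε := by
  intro x hx
  have hxa : ⟪v, x - a⟫ = (⟪v, x⟫ - c) - (⟪v, a⟫ - c) := by
    rw [inner_sub_right]; ring
  calc |⟪‖v‖⁻¹ • v, x - a⟫| = ‖v‖⁻¹ * |(⟪v, x⟫ - c) - (⟪v, a⟫ - c)| := by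
        rw [real_inner_smul_left, abs_mul, abs_inv, abs_norm, hxa]
    _ ≤ ‖v‖⁻¹ * (‖v‖ * ε + ‖v‖ * ε) := by
        gcongr
        exact (abs_sub _ _).trans (add_le_add (abs_inner_sub_le_of_mem_thickening (hA hx))
          (abs_inner_sub_le_of_mem_thickening (hA ha)))
    _ = 2 * ε := by field_simp; ring

lemma isClosed_setOf_forall_abs_inner_le (S : Set E) (ε : ℝ) :
    IsClosed {u : E | ∀ x ∈ S, |⟪u, x⟫| ≤ ε} := by
  simp only [Set.ofPred_forall]
  exact isClosed_biInter fun x _ ↦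
    isClosed_le (continuous_id.inner continuous_const).abs continuous_const

lemma exists_unit_orthogonal_of_forall_abs_inner_le [ProperSpace E] {S : Set E}
    (h : ∀ ε > 0, ∃ u : E, ‖u‖ = 1 ∧ ∀ x ∈ S, |⟪u, x⟫| ≤ ε) :
    ∃ u : E, ‖u‖ = 1 ∧ ∀ x ∈ S, ⟪u, x⟫ = 0 := by
  let t : Set.Ioi (0 : ℝ) → Set E := fun ε ↦
    sphere 0 1 ∩ {u | ∀ x ∈ S, |⟪u, x⟫| ≤ ε}
  have ht_mono : Monotone t := fun ε δ hεδ ↦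
    Set.inter_subset_inter_right _ fun u hu x hx ↦ (hu x hx).trans hεδ
  have hclosed := isClosed_setOf_forall_abs_inner_le S
  obtain ⟨u, hu⟩ := IsCompact.nonempty_iInter_of_directed_nonempty_isCompact_isClosed t
    ht_mono.directed_ge
    (fun ε ↦ (h ε ε.2).imp fun u hu ↦ ⟨mem_sphere_zero_iff_norm.mpr hu.1, hu.2⟩)
    (fun ε ↦ (isCompact_sphere 0 1).inter_right (hclosed ε))
    (fun ε ↦ isClosed_sphere.inter (hclosed ε))
  simp only [Set.mem_iInter, t, Set.mem_inter_iff, mem_sphere_zero_iff_norm] at hu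
  refine ⟨u, (hu ⟨1, Set.mem_Ioi.mpr one_pos⟩).1, fun x hx ↦ abs_nonpos_iff.mp ?_⟩
  exact le_of_forall_gt_imp_ge_of_dense fun ε hε ↦ (hu ⟨ε, hε⟩).2 x hx

/-- A subset `A ⊆ ℝᵈ` is contained in some affine hyperplane iff the infimum of the `ε > 0`
such that `A` is contained in the open `ε`-neighborhood of some affine hyperplane is `0`,
i.e. iff for every `ε > 0` there is an affine hyperplane whose `ε`-neighborhood contains `A`.
Affine hyperplanes are written as level sets `{x | ⟪v, x⟫ = c}` with `v ≠ 0`. -/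
theorem subset_hyperplane_iff_inf_thickening_zero
    (d : ℕ) (A : Set (EuclideanSpace ℝ (Fin d))) :
    (∃ v : EuclideanSpace ℝ (Fin d), v ≠ 0 ∧ ∃ c : ℝ,
        A ⊆ {x | inner ℝ v x = (c : ℝ)}) ↔
      ∀ ε : ℝ, 0 < ε → ∃ v : EuclideanSpace ℝ (Fin d), v ≠ 0 ∧ ∃ c : ℝ,
        A ⊆ Metric.thickening ε {x | inner ℝ v x = (c : ℝ)} := by
  refine ⟨fun ⟨v, hv, c, hA⟩ ε hε ↦ ⟨v, hv, c, hA.trans (self_subset_thickening hε _)⟩,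
    fun h ↦ ?_⟩
  rcases A.eq_empty_or_nonempty with rfl | ⟨a, ha⟩
  · obtain ⟨v, hv, c, -⟩ := h 1 one_pos
    exact ⟨v, hv, c, Set.empty_subset _⟩
  have hflat : ∀ ε > 0, ∃ u : EuclideanSpace ℝ (Fin d), ‖u‖ = 1 ∧
      ∀ y ∈ (· - a) '' A, |⟪u, y⟫| ≤ ε := by
    intro ε hε
    obtain ⟨v, hv, c, hA⟩ := h (ε / 2) (half_pos hε)
    refine ⟨‖v‖⁻¹ • v, norm_smul_inv_norm hv, Set.forall_mem_image.mpr fun x hx ↦ ?_⟩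
    simpa [mul_div_cancel₀] using
      abs_inner_normalize_sub_le_of_subset_thickening ha hv hA x hx
  obtain ⟨u, hu, horth⟩ := exists_unit_orthogonal_of_forall_abs_inner_le hflat
  refine ⟨u, norm_ne_zero_iff.mp (hu ▸ one_ne_zero), ⟪u, a⟫, fun x hx ↦ ?_⟩
  have := horth (x - a) ⟨x, hx, rfl⟩
  rwa [inner_sub_right, sub_eq_zero] at this
end

section
/- Let A be a finite alphabet, T ⊆ A* a tree, and 𝒜 a nonempty collection of nonempty subsets of A. Then T has an infinite 𝒜-subtree if and only if for every n ∈ ℕ, T has an 𝒜-subtree of length n. -/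
/-!
For the forward direction, truncate the infinite subtree at depth `n`; it reaches that depth
because every children set in `𝒜` is nonempty. Conversely, given `𝒜`-subtrees `S n` of every
length, take their limit `liminf S U` along a nonprincipal ultrafilter `U`: it is again a subtree
of `T`, and since `A` is finite, the children set of each vertex `a` in `S n` takes a single value
`s` for `U`-almost all `n`. That value lies in `𝒜` (as `S n` is deeper than `a` for almost all `n`)
and is the children set of `a` in the limit.
-/

variable {A : Type*}

/-- A tree over the alphabet `A`: a set of finite words containing the empty word and
closed under taking prefixes. -/
def IsTree (T : Set (List A)) : Prop :=
  [] ∈ T ∧ ∀ v w : List A, v <+: w → w ∈ T → v ∈ T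

/-- The set of children of the vertex `a` in the tree `S`. -/
def childrenSet (S : Set (List A)) (a : List A) : Set A := {i | a ++ [i] ∈ S}

/-- `T` has an (infinite) `𝒜`-subtree: a subtree all of whose vertices have children set
belonging to `𝒜`. -/
def HasSubtree (T : Set (List A)) (𝒜 : Set (Set A)) : Prop :=
  ∃ S : Set (List A), S ⊆ T ∧ IsTree S ∧ ∀ a ∈ S, childrenSet S a ∈ 𝒜

/-- `T` has an `𝒜`-subtree of length `n`: a finite subtree whose maximal vertices have
length `n - 1`, all of whose non-maximal vertices have children set belonging to `𝒜`. -/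
def HasSubtreeOfLength (T : Set (List A)) (𝒜 : Set (Set A)) (n : ℕ) : Prop :=
  ∃ S : Set (List A), S ⊆ T ∧ IsTree S ∧ (∀ w ∈ S, w.length < n) ∧
    (∃ w ∈ S, w.length = n - 1) ∧ ∀ a ∈ S, a.length < n - 1 → childrenSet S a ∈ 𝒜

open Filter

theorem Ultrafilter.exists_eventually_eq {ι β : Type*} [Finite β] (U : Ultrafilter ι)
    (f : ι → β) : ∃ b, ∀ᶠ i in U, f i = b := by
  obtain ⟨b, hb⟩ := (U.map f).eq_pure_of_finite
  have hb' : {b} ∈ U.map f := hb ▸ Ultrafilter.mem_pure.2 rfl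
  exact ⟨b, Ultrafilter.mem_map.1 hb'⟩

namespace IsTree

theorem exists_length_eq {S : Set (List A)} {𝒜 : Set (Set A)} (h𝒜 : ∀ s ∈ 𝒜, s.Nonempty)
    (hS : IsTree S) (hch : ∀ a ∈ S, childrenSet S a ∈ 𝒜) (n : ℕ) :
    ∃ w ∈ S, w.length = n := by
  induction n with
  | zero => exact ⟨[], hS.1, rfl⟩
  | succ k ih =>
    obtain ⟨w, hw, rfl⟩ := ih
    obtain ⟨i, hi⟩ := h𝒜 _ (hch w hw)
    exact ⟨w ++ [i], hi, by simp⟩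

theorem sep_length_le {S : Set (List A)} (hS : IsTree S) (n : ℕ) :
    IsTree {w ∈ S | w.length ≤ n} :=
  ⟨⟨hS.1, Nat.zero_le n⟩, fun v w hvw hw => ⟨hS.2 v w hvw hw.1, hvw.length_le.trans hw.2⟩⟩

theorem liminf {ι : Type*} {l : Filter ι} {S : ι → Set (List A)}
    (hS : ∀ᶠ i in l, IsTree (S i)) : IsTree (liminf S l) := by
  simp only [IsTree, mem_liminf_iff_eventually_mem]
  exact ⟨hS.mono fun i hi => hi.1,
    fun v w hvw hw => (hS.and hw).mono fun i hi => hi.1.2 v w hvw hi.2⟩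

end IsTree

theorem childrenSet_sep_length_le {S : Set (List A)} {a : List A} {n : ℕ} (ha : a.length < n) :
    childrenSet {w ∈ S | w.length ≤ n} a = childrenSet S a := by
  ext i
  simp only [childrenSet, Set.mem_ofPred_eq, List.length_append, List.length_singleton]
  exact and_iff_left (by omega)

theorem childrenSet_liminf {ι : Type*} (l : Filter ι) (S : ι → Set (List A)) (a : List A) :
    childrenSet (liminf S l) a = liminf (fun i => childrenSet (S i) a) l := by
  ext
  simp only [childrenSet, Set.mem_ofPred_eq, mem_liminf_iff_eventually_mem]

theorem childrenSet_liminf_mem [Finite A] {ι : Type*} (U : Ultrafilter ι)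
    {S : ι → Set (List A)} {𝒜 : Set (Set A)} {a : List A}
    (hS : ∀ᶠ i in U, childrenSet (S i) a ∈ 𝒜) : childrenSet (liminf S (U : Filter ι)) a ∈ 𝒜 := by
  obtain ⟨s, hs⟩ := U.exists_eventually_eq fun i => childrenSet (S i) a
  obtain ⟨i, hi𝒜, his⟩ := (hS.and hs).exists
  rw [childrenSet_liminf, liminf_congr hs, liminf_const, ← his]
  exact hi𝒜

theorem HasSubtree.hasSubtreeOfLength {T : Set (List A)} {𝒜 : Set (Set A)}
    (h𝒜 : ∀ s ∈ 𝒜, s.Nonempty) (h : HasSubtree T 𝒜) (n : ℕ) :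
    HasSubtreeOfLength T 𝒜 (n + 1) := by
  obtain ⟨S, hST, hS, hch⟩ := h
  obtain ⟨w, hw, hwn⟩ := hS.exists_length_eq h𝒜 hch n
  refine ⟨{w ∈ S | w.length ≤ n}, fun w hw => hST hw.1, hS.sep_length_le n,
    fun w hw => Nat.lt_succ_of_le hw.2, ⟨w, ⟨hw, hwn.le⟩, hwn⟩, ?_⟩
  rintro a ⟨ha, -⟩ hal
  rw [childrenSet_sep_length_le (by simpa using hal)]
  exact hch a ha

theorem HasSubtree.of_forall_hasSubtreeOfLength [Finite A] {T : Set (List A)}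
    {𝒜 : Set (Set A)} (h : ∀ n : ℕ, HasSubtreeOfLength T 𝒜 (n + 1)) : HasSubtree T 𝒜 := by
  choose S hST hS _ _ hch using h
  set U : Ultrafilter ℕ := Ultrafilter.of atTop
  refine ⟨liminf S (U : Filter ℕ), fun w hw => ?_, IsTree.liminf (Eventually.of_forall hS),
    fun a ha => childrenSet_liminf_mem U ?_⟩
  · obtain ⟨n, hn⟩ := (mem_liminf_iff_eventually_mem.1 hw).exists
    exact hST n hn
  · have hdeep : ∀ᶠ n in U, a.length < n := Ultrafilter.of_le atTop (eventually_gt_atTop _)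
    exact ((mem_liminf_iff_eventually_mem.1 ha).and hdeep).mono fun n hn => hch n a hn.1 hn.2

theorem hasSubtree_iff_hasSubtreeOfLength_general [Finite A]
    (T : Set (List A)) (𝒜 : Set (Set A))
    (h𝒜 : ∀ s ∈ 𝒜, s.Nonempty) :
    HasSubtree T 𝒜 ↔ ∀ n : ℕ, HasSubtreeOfLength T 𝒜 (n + 1) :=
  ⟨fun h => h.hasSubtreeOfLength h𝒜, HasSubtree.of_forall_hasSubtreeOfLength⟩

/-- A tree over a finite alphabet has an infinite `𝒜`-subtree iff it has `𝒜`-subtrees of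
every finite length. -/
theorem hasSubtree_iff_hasSubtreeOfLength [Finite A]
    (T : Set (List A)) (hT : IsTree T) (𝒜 : Set (Set A))
    (h𝒜ne : 𝒜.Nonempty) (h𝒜 : ∀ s ∈ 𝒜, s.Nonempty) :
    HasSubtree T 𝒜 ↔ ∀ n : ℕ, HasSubtreeOfLength T 𝒜 (n + 1) :=
  hasSubtree_iff_hasSubtreeOfLength_general T 𝒜 h𝒜
end

section
/- Let Φ = {φ_i}_{i∈Λ} be a finite similarity IFS on ℝ^d with contraction ratios {r_i}, attractor K, and coding map γ. Let T ⊆ Λ* be a tree such that for every i ∈ T and every affine hyperplane ℒ ⊂ ℝ^d there exists j ∈ W_T(i) with φ_j(K) ∩ ℒ^(c) = ∅, for a fixed c > 0 (T is (K,c)-diffuse). Then γ(∂T) is hyperplane β-diffuse with β = c·r_min / diam(K), where r_min = min_i r_i. -/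
open Metric

noncomputable section

/-- Composition `φ_{w₁} ∘ … ∘ φ_{w_n}` of the maps of an IFS along a finite word `w`. -/
def compWord {Λ E : Type*} (φ : Λ → E → E) (w : List Λ) : E → E :=
  w.foldr (fun i g => φ i ∘ g) id

/-- A closed set is hyperplane `β`-diffuse. -/
def HyperplaneDiffuseWith {d : ℕ} (F : Set (EuclideanSpace ℝ (Fin d))) (β : ℝ) : Prop :=
  ∃ ξ₀ : ℝ, 0 < ξ₀ ∧ ∀ ξ : ℝ, 0 < ξ → ξ < ξ₀ → ∀ x ∈ F,
    ∀ v : EuclideanSpace ℝ (Fin d), v ≠ 0 → ∀ c' : ℝ,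
      ((F ∩ ball x ξ) \ thickening (β * ξ) {y | inner ℝ v y = (c' : ℝ)}).Nonempty

/-!
Given `x ∈ γ(∂T)` and `ξ < diam K`, follow the coding of `x` down to the first cylinder
`φ_w(K)` with `r_w · diam K < ξ`; by minimality `r_w · diam K ≥ r_min · ξ`. The similarity
`φ_w` pulls a hyperplane `ℒ` back to a hyperplane, so diffuseness of `T` at `w` gives a child
`w i` whose piece `φ_i(K)` avoids the `c`-neighbourhood of the pulled-back hyperplane, i.e.
`φ_{wi}(K)` avoids the `r_w c ≥ βξ`-neighbourhood of `ℒ`. Since diffuseness also means that `T`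
has no leaves, `w i` extends to an infinite branch of `T`, which codes a point of `γ(∂T)` in
`φ_{wi}(K) ⊆ B_ξ(x)`.
-/

section Similarity

theorem continuous_of_dist_eq_mul {X Y : Type*} [PseudoMetricSpace X] [PseudoMetricSpace Y]
    {f : X → Y} {ρ : ℝ} (hf : ∀ x y, dist (f x) (f y) = ρ * dist x y) : Continuous f :=
  (LipschitzWith.of_dist_le_mul (K := ρ.toNNReal) fun x y => by
    rw [hf]
    gcongr
    exact Real.le_coe_toNNReal ρ).continuous

theorem mem_thickening_preimage_of_dist_eq_mul {X Y : Type*} [PseudoMetricSpace X]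
    [PseudoMetricSpace Y] {f : X → Y} {ρ δ : ℝ} (hsurj : Function.Surjective f) (hρ : 0 < ρ)
    (hf : ∀ x y, dist (f x) (f y) = ρ * dist x y) {s : Set Y} {x : X}
    (hx : f x ∈ thickening (ρ * δ) s) : x ∈ thickening δ (f ⁻¹' s) := by
  obtain ⟨q, hq, hdist⟩ := mem_thickening_iff.mp hx
  obtain ⟨p, rfl⟩ := hsurj q
  rw [hf, mul_lt_mul_iff_right₀ hρ] at hdist
  exact mem_thickening_iff.mpr ⟨p, hq, hdist⟩

variable {E : Type*} [NormedAddCommGroup E] {f : E → E} {ρ : ℝ}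

theorem exists_affineMap_of_dist_eq_mul [NormedSpace ℝ E] [StrictConvexSpace ℝ E]
    (hf : ∀ x y, dist (f x) (f y) = ρ * dist x y) : ∃ g : E →ᵃ[ℝ] E, ⇑g = f := by
  have hmid : ∀ x y, f (midpoint ℝ x y) = midpoint ℝ (f x) (f y) := fun x y =>
    eq_midpoint_of_dist_eq_half
      (by rw [hf, hf, dist_left_midpoint, Real.norm_ofNat]; ring)
      (by rw [hf, hf, dist_midpoint_right, Real.norm_ofNat]; ring)
  exact ⟨AffineMap.ofMapMidpoint f hmid (continuous_of_dist_eq_mul hf), rfl⟩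

theorem surjective_of_dist_eq_mul [NormedSpace ℝ E] [StrictConvexSpace ℝ E]
    [FiniteDimensional ℝ E] (hρ : ρ ≠ 0) (hf : ∀ x y, dist (f x) (f y) = ρ * dist x y) :
    Function.Surjective f := by
  obtain ⟨g, rfl⟩ := exists_affineMap_of_dist_eq_mul hf
  have hinj : Function.Injective g := fun x y hxy => by
    simpa [hxy, hρ] using hf x y
  exact g.linear_surjective_iff.mp
    (LinearMap.injective_iff_surjective.mp (g.linear_injective_iff.mpr hinj))

theorem exists_preimage_hyperplane_eq [InnerProductSpace ℝ E] [FiniteDimensional ℝ E]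
    (hρ : ρ ≠ 0) (hf : ∀ x y, dist (f x) (f y) = ρ * dist x y) {v : E} (hv : v ≠ 0) (a : ℝ) :
    ∃ v' ≠ 0, ∃ a' : ℝ, f ⁻¹' {y | inner ℝ v y = a} = {u | inner ℝ v' u = a'} := by
  obtain ⟨g, rfl⟩ := exists_affineMap_of_dist_eq_mul hf
  obtain ⟨u, hu⟩ := g.linear_surjective_iff.mpr (surjective_of_dist_eq_mul hρ hf) v
  refine ⟨LinearMap.adjoint g.linear v, fun h0 => hv ?_, a - inner ℝ v (g 0), ?_⟩
  · rw [← inner_self_eq_zero (𝕜 := ℝ)]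
    nth_rw 2 [← hu]
    rw [← LinearMap.adjoint_inner_left, h0, inner_zero_left]
  · ext u
    have hg : g u = g.linear u + g 0 := congrFun g.decomp u
    rw [Set.mem_preimage, Set.mem_ofPred_eq, Set.mem_ofPred_eq, hg, inner_add_right,
      LinearMap.adjoint_inner_left, eq_sub_iff_add_eq]

theorem exists_hyperplane_mem_thickening_of_map_mem_thickening [InnerProductSpace ℝ E]
    [FiniteDimensional ℝ E] (hρ : 0 < ρ) (hf : ∀ x y, dist (f x) (f y) = ρ * dist x y)
    {v : E} (hv : v ≠ 0) (a : ℝ) :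
    ∃ v' ≠ 0, ∃ a' : ℝ, ∀ δ y, f y ∈ thickening (ρ * δ) {z | inner ℝ v z = a} →
      y ∈ thickening δ {u | inner ℝ v' u = a'} := by
  obtain ⟨v', hv', a', hpre⟩ := exists_preimage_hyperplane_eq hρ.ne' hf hv a
  refine ⟨v', hv', a', fun δ y hy => ?_⟩
  rw [← hpre]
  exact mem_thickening_preimage_of_dist_eq_mul (surjective_of_dist_eq_mul hρ.ne' hf) hρ hf hy

end Similarity

section Words

variable {Λ X : Type*} (φ : Λ → X → X) {K : Set X}

theorem compWord_append (u w : List Λ) :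
    compWord φ (u ++ w) = compWord φ u ∘ compWord φ w := by
  induction u with
  | nil => rfl
  | cons i u ih => exact congrArg (φ i ∘ ·) ih

theorem image_compWord_subset (hK : ∀ i, φ i '' K ⊆ K) (w : List Λ) :
    compWord φ w '' K ⊆ K := by
  induction w with
  | nil => simp [compWord]
  | cons i w ih => exact (Set.image_comp (φ i) _ K).trans_subset ((Set.image_mono ih).trans (hK i))

theorem image_compWord_subset_of_prefix (hK : ∀ i, φ i '' K ⊆ K) {u w : List Λ}
    (h : u <+: w) : compWord φ w '' K ⊆ compWord φ u '' K := by
  obtain ⟨t, rfl⟩ := h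
  rw [compWord_append, Set.image_comp]
  exact Set.image_mono (image_compWord_subset φ hK t)

theorem continuous_compWord [TopologicalSpace X] (hφ : ∀ i, Continuous (φ i)) (w : List Λ) :
    Continuous (compWord φ w) := by
  induction w with
  | nil => exact continuous_id
  | cons i w ih => exact (hφ i).comp ih

theorem dist_compWord [PseudoMetricSpace X] {r : Λ → ℝ}
    (hφ : ∀ i x y, dist (φ i x) (φ i y) = r i * dist x y) (w : List Λ) (x y : X) :
    dist (compWord φ w x) (compWord φ w y) = (w.map r).prod * dist x y := by
  induction w with
  | nil => simp [compWord]
  | cons i w ih =>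
    simp only [List.map_cons, List.prod_cons, mul_assoc, ← ih]
    exact hφ i _ _

end Words

section TreeLimitSet

variable {Λ X : Type*} (φ : Λ → X → X) {K : Set X} {T : Set (List Λ)}

/-- The projection `γ(∂T)` of the boundary of a tree `T ⊆ Λ*`. -/
def treeLimitSet (φ : Λ → X → X) (K : Set X) (T : Set (List Λ)) : Set X :=
  ⋂ n : ℕ, ⋃ w ∈ {w ∈ T | w.length = n}, compWord φ w '' K

theorem mem_treeLimitSet_iff {x : X} :
    x ∈ treeLimitSet φ K T ↔ ∀ n, ∃ w ∈ T, w.length = n ∧ x ∈ compWord φ w '' K := by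
  simp only [treeLimitSet, Set.mem_iInter, Set.mem_iUnion, Set.mem_ofPred_eq, exists_prop,
    and_assoc]

theorem treeLimitSet_inter_image_compWord_nonempty [TopologicalSpace X] [T2Space X]
    (hKc : IsCompact K) (hKne : K.Nonempty) (hφ : ∀ i, Continuous (φ i)) (hK : ∀ i, φ i '' K ⊆ K)
    (hprefix : ∀ v w : List Λ, v <+: w → w ∈ T → v ∈ T)
    (hchild : ∀ w ∈ T, ∃ i, w ++ [i] ∈ T) {u : List Λ} (hu : u ∈ T) :
    (treeLimitSet φ K T ∩ compWord φ u '' K).Nonempty := by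
  choose child hchild using hchild
  let branch : ℕ → T := fun n =>
    Nat.rec ⟨u, hu⟩ (fun _ w => ⟨w.1 ++ [child w.1 w.2], hchild w.1 w.2⟩) n
  have hlength (n : ℕ) : (branch n).1.length = u.length + n := by
    induction n with
    | zero => rfl
    | succ n ih => rw [← add_assoc, ← ih]; exact List.length_append ..
  have hcompact : ∀ w, IsCompact (compWord φ w '' K) := fun w =>
    hKc.image (continuous_compWord φ hφ w)
  obtain ⟨z, hz⟩ := IsCompact.nonempty_iInter_of_sequence_nonempty_isCompact_isClosed
    (fun n => compWord φ (branch n).1 '' K)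
    (fun n => image_compWord_subset_of_prefix φ hK ⟨_, rfl⟩)
    (fun n => hKne.image _) (hcompact _) (fun n => (hcompact _).isClosed)
  rw [Set.mem_iInter] at hz
  refine ⟨z, (mem_treeLimitSet_iff φ).mpr fun n => ?_, hz 0⟩
  exact ⟨(branch n).1.take n, hprefix _ _ (List.take_prefix _ _) (branch n).2,
    by simp [hlength], image_compWord_subset_of_prefix φ hK (List.take_prefix _ _) (hz n)⟩

theorem exists_mem_image_compWord_prod_mem_Ico [Finite Λ] [Nonempty Λ] (hK : ∀ i, φ i '' K ⊆ K)
    (hprefix : ∀ v w : List Λ, v <+: w → w ∈ T → v ∈ T) {r : Λ → ℝ}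
    (hr : ∀ i, r i ∈ Set.Ioo (0 : ℝ) 1) {rmin : ℝ} (hrmin : ∀ i, rmin ≤ r i) {x : X}
    (hx : x ∈ treeLimitSet φ K T) {δ : ℝ} (hδ0 : 0 < δ) (hδ1 : δ ≤ 1) :
    ∃ w ∈ T, x ∈ compWord φ w '' K ∧ (w.map r).prod ∈ Set.Ico (rmin * δ) δ := by
  classical
  obtain ⟨i₀, hi₀⟩ := Finite.exists_max r
  obtain ⟨n, hn⟩ := exists_pow_lt_of_lt_one hδ0 (hr i₀).2
  have hsmall : ∃ n, ∃ w ∈ T, w.length = n ∧ x ∈ compWord φ w '' K ∧ (w.map r).prod < δ := by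
    obtain ⟨w, hwT, rfl, hxw⟩ := (mem_treeLimitSet_iff φ).mp hx n
    refine ⟨_, w, hwT, rfl, hxw, lt_of_le_of_lt ?_ hn⟩
    simpa using List.prod_map_le_prod_map₀ r (fun _ => r i₀) (fun i _ => (hr i).1.le)
      fun i _ => hi₀ i
  obtain ⟨w, hwT, hwlength, hxw, hw⟩ := Nat.find_spec hsmall
  refine ⟨w, hwT, hxw, ?_, hw⟩
  have hwne : w ≠ [] := by
    rintro rfl
    exact absurd hδ1 (by simpa using hw)
  obtain ⟨parent, j, rfl⟩ : ∃ parent j, w = parent ++ [j] :=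
    ⟨_, _, (List.dropLast_append_getLast hwne).symm⟩
  have hparent : δ ≤ (parent.map r).prod := by
    have hmin := Nat.find_min hsmall (m := parent.length) (by rw [← hwlength]; simp)
    push Not at hmin
    exact hmin parent (hprefix _ _ (List.prefix_append _ _) hwT) rfl
      (image_compWord_subset_of_prefix φ hK (List.prefix_append _ _) hxw)
  calc rmin * δ ≤ r j * δ := mul_le_mul_of_nonneg_right (hrmin j) hδ0.le
    _ ≤ r j * (parent.map r).prod := mul_le_mul_of_nonneg_left hparent (hr j).1.le
    _ = ((parent ++ [j]).map r).prod := by simp [mul_comm]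

end TreeLimitSet

theorem diffuse_tree_implies_hyperplane_diffuse_general
    {d : ℕ} {Λ : Type*} [Fintype Λ] [Nonempty Λ]
    (φ : Λ → EuclideanSpace ℝ (Fin d) → EuclideanSpace ℝ (Fin d))
    (r : Λ → ℝ) (hr : ∀ i, r i ∈ Set.Ioo (0:ℝ) 1)
    (hsim : ∀ i x y, dist (φ i x) (φ i y) = r i * dist x y)
    (K : Set (EuclideanSpace ℝ (Fin d))) (hKc : IsCompact K) (hKne : K.Nonempty)
    (hK : K = ⋃ i, φ i '' K)
    (rmin : ℝ) (hrmin : IsLeast (Set.range r) rmin)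
    (T : Set (List Λ))
    (hprefix : ∀ v w : List Λ, v <+: w → w ∈ T → v ∈ T)
    (c : ℝ) (hc : 0 < c)
    (hdiffuse : ∀ w ∈ T, ∀ v : EuclideanSpace ℝ (Fin d) , v ≠ 0 → ∀ c' : ℝ,
      ∃ i : Λ, w ++ [i] ∈ T ∧
        (φ i '' K) ∩ thickening c {y | inner ℝ v y = (c' : ℝ)} = ∅) :
    HyperplaneDiffuseWith
      (⋂ n : ℕ, ⋃ w ∈ {w ∈ T | w.length = n}, compWord φ w '' K)
      (c * rmin / Metric.diam K) := by
  have hsub : ∀ i, φ i '' K ⊆ K := fun i =>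
    (Set.subset_iUnion (fun i => φ i '' K) i).trans hK.symm.subset
  obtain ⟨⟨i₀, rfl⟩, hrmin⟩ := hrmin
  rcases (diam_nonneg (s := K)).eq_or_lt with hD | hD
  · refine ⟨1, one_pos, fun ξ hξ _ x hx _ _ _ => ⟨x, ⟨hx, mem_ball_self hξ⟩, ?_⟩⟩
    rw [← hD, div_zero, zero_mul, thickening_of_nonpos le_rfl]
    exact Set.notMem_empty _
  refine ⟨diam K, hD, fun ξ hξ hξD x hx v hv a => ?_⟩
  obtain ⟨w, hwT, ⟨x', hx'K, rfl⟩, hlow, hsmall⟩ :=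
    exists_mem_image_compWord_prod_mem_Ico φ hsub hprefix hr (fun i => hrmin ⟨i, rfl⟩) hx
      (div_pos hξ hD) ((div_le_one hD).mpr hξD.le)
  have hρ : 0 < (w.map r).prod := List.prod_pos (by simpa using fun i _ => (hr i).1)
  have hf := dist_compWord φ hsim w
  obtain ⟨v', hv', a', hpull⟩ := exists_hyperplane_mem_thickening_of_map_mem_thickening hρ hf hv a
  obtain ⟨i, hiT, hi⟩ := hdiffuse w hwT v' hv' a'
  obtain ⟨_, hzF, y, hy, rfl⟩ := treeLimitSet_inter_image_compWord_nonempty φ hKc hKne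
    (fun i => continuous_of_dist_eq_mul (hsim i)) hsub hprefix
    (fun u hu => (hdiffuse u hu v hv a).imp fun _ h => h.1) hiT
  rw [compWord_append, Function.comp_apply] at hzF
  refine ⟨_, ⟨hzF, ?_⟩, fun hthick => hi.subset ⟨⟨y, hy, rfl⟩, hpull c _ ?_⟩⟩
  · rw [mem_ball, hf]
    calc _ ≤ (w.map r).prod * diam K := by
          gcongr
          exact dist_le_diam_of_mem hKc.isBounded
            (image_compWord_subset φ hsub [i] ⟨y, hy, rfl⟩) hx'K
      _ < ξ := (lt_div_iff₀ hD).mp hsmall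
  · refine thickening_mono ?_ _ hthick
    calc c * r i₀ / diam K * ξ = r i₀ * (ξ / diam K) * c := by ring
      _ ≤ (w.map r).prod * c := by gcongr

/-- If `T` is a `(K,c)`-diffuse tree for a similarity IFS `Φ = {φ_i}` with attractor `K`,
then the projection `γ(∂T) = ⋂ₙ ⋃_{w ∈ Tₙ} φ_w(K)` is hyperplane `β`-diffuse with
`β = c · r_min / diam K`. -/
theorem diffuse_tree_implies_hyperplane_diffuse
    {d : ℕ} {Λ : Type*} [Fintype Λ] [Nonempty Λ]
    (φ : Λ → EuclideanSpace ℝ (Fin d) → EuclideanSpace ℝ (Fin d))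
    (r : Λ → ℝ) (hr : ∀ i, r i ∈ Set.Ioo (0:ℝ) 1)
    (hsim : ∀ i x y, dist (φ i x) (φ i y) = r i * dist x y)
    (K : Set (EuclideanSpace ℝ (Fin d))) (hKc : IsCompact K) (hKne : K.Nonempty)
    (hK : K = ⋃ i, φ i '' K)
    (rmin : ℝ) (hrmin : IsLeast (Set.range r) rmin)
    (T : Set (List Λ)) (hroot : [] ∈ T)
    (hprefix : ∀ v w : List Λ, v <+: w → w ∈ T → v ∈ T)
    (c : ℝ) (hc : 0 < c)
    (hdiffuse : ∀ w ∈ T, ∀ v : EuclideanSpace ℝ (Fin d) , v ≠ 0 → ∀ c' : ℝ,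
      ∃ i : Λ, w ++ [i] ∈ T ∧
        (φ i '' K) ∩ thickening c {y | inner ℝ v y = (c' : ℝ)} = ∅) :
    HyperplaneDiffuseWith
      (⋂ n : ℕ, ⋃ w ∈ {w ∈ T | w.length = n}, compWord φ w '' K)
      (c * rmin / Metric.diam K) :=
  diffuse_tree_implies_hyperplane_diffuse_general φ r hr hsim K hKc hKne hK rmin hrmin T hprefix c
    hc hdiffuse
end
end

section
/- Let Φ = {φ_i}_{i∈Λ} be a finite similarity IFS on ℝ^d and F ⊂ ℝ^d a nonempty compact set with φ_i(F) ⊆ F for all i ∈ Λ. Then there exists c > 0 such that for every affine hyperplane ℒ ⊆ ℝ^d some i ∈ Λ satisfies φ_i(F) ∩ ℒ^(c) = ∅, if and only if for every affine hyperplane ℒ there exists i ∈ Λ with φ_i(F) ∩ ℒ = ∅. -/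
/-!
Normalise a hyperplane to `{y | ⟪u, y⟫ = a}` with `‖u‖ = 1`; then `|⟪u, y⟫ - a|` is the distance
from `y` to it, jointly continuous in `(u, a, y)`. If every such hyperplane misses some compact
piece, this distance is positive on that piece, hence stays above a positive constant on the piece
for all nearby hyperplanes; compactness of the parameters `(u, a)` with `a` bounded gives one
constant for all of them, and hyperplanes with `|a|` large miss any fixed bounded piece.
-/

open Metric Filter Topology

theorem IsCompact.exists_pos_forall_exists_forall_lt {X Y ι : Type*} [TopologicalSpace X]
    [TopologicalSpace Y] {S : Set X} (hS : IsCompact S) {K : ι → Set Y}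
    (hK : ∀ i, IsCompact (K i)) {f : X → Y → ℝ} (hf : Continuous (Function.uncurry f))
    (h : ∀ x ∈ S, ∃ i, ∀ y ∈ K i, 0 < f x y) :
    ∃ c > 0, ∀ x ∈ S, ∃ i, ∀ y ∈ K i, c < f x y := by
  have hlocal : ∀ x ∈ S, ∀ᶠ p : ℝ × X in 𝓝 (0, x), ∃ i, ∀ y ∈ K i, p.1 < f p.2 y := by
    intro x hx
    obtain ⟨i, hi⟩ := h x hx
    refine ((hK i).eventually_forall_of_forall_eventually fun y hy => ?_).mono
      fun p hp => ⟨i, hp⟩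
    have hcont : Continuous fun z : (ℝ × X) × Y => f z.1.2 z.2 :=
      hf.comp (continuous_snd.fst'.prodMk continuous_snd)
    exact continuous_fst.fst.continuousAt.eventually_lt hcont.continuousAt (hi y hy)
  obtain ⟨c, hcS, hc⟩ := ((hS.eventually_forall_of_forall_eventually
    (P := fun c x => ∃ i, ∀ y ∈ K i, c < f x y) hlocal).filter_mono nhdsWithin_le_nhds).and
      (self_mem_nhdsWithin (s := Set.Ioi (0 : ℝ)) (a := 0)) |>.exists
  exact ⟨c, hc, hcS⟩

theorem continuous_of_forall_dist_eq_mul {α β : Type*} [PseudoMetricSpace α]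
    [PseudoMetricSpace β] {f : α → β} {r : ℝ} (h : ∀ x y, dist (f x) (f y) = r * dist x y) :
    Continuous f :=
  (LipschitzWith.of_dist_le_mul (K := ‖r‖₊) fun x y => (h x y).trans_le <|
    mul_le_mul_of_nonneg_right (le_abs_self r) dist_nonneg).continuous

section Hyperplane

variable {E : Type*} [NormedAddCommGroup E] [InnerProductSpace ℝ E]

theorem abs_inner_sub_lt_of_mem_thickening {u : E} (hu : ‖u‖ ≤ 1) {a c : ℝ} {y : E}
    (hy : y ∈ thickening c {z | inner ℝ u z = a}) : |inner ℝ u y - a| < c := by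
  obtain ⟨z, hz, hyz⟩ := mem_thickening_iff.1 hy
  calc |inner ℝ u y - a| = |inner ℝ u (y - z)| := by rw [inner_sub_right, hz.out]
    _ ≤ ‖u‖ * ‖y - z‖ := abs_real_inner_le_norm _ _
    _ ≤ dist y z := by rw [dist_eq_norm]; exact mul_le_of_le_one_left (norm_nonneg _) hu
    _ < c := hyz

theorem inter_thickening_hyperplane_eq_empty {K : Set E} {u : E} (hu : ‖u‖ ≤ 1) {a c : ℝ}
    (h : ∀ y ∈ K, c ≤ |inner ℝ u y - a|) : K ∩ thickening c {z | inner ℝ u z = a} = ∅ :=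
  Set.eq_empty_of_forall_notMem fun y ⟨hyK, hy⟩ =>
    (h y hyK).not_gt (abs_inner_sub_lt_of_mem_thickening hu hy)

theorem hyperplane_eq_normalize {v : E} (hv : v ≠ 0) (a : ℝ) :
    {y | inner ℝ v y = a} = {y | inner ℝ (‖v‖⁻¹ • v) y = ‖v‖⁻¹ * a} := by
  ext y
  simp [real_inner_smul_left, hv]

theorem exists_pos_forall_exists_inter_thickening_hyperplane_eq_empty [ProperSpace E]
    {ι : Type*} [Nonempty ι] {K : ι → Set E} (hK : ∀ i, IsCompact (K i))
    (h : ∀ v : E, v ≠ 0 → ∀ a : ℝ, ∃ i, K i ∩ {y | inner ℝ v y = a} = ∅) :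
    ∃ c > 0, ∀ v : E, v ≠ 0 → ∀ a : ℝ, ∃ i, K i ∩ thickening c {y | inner ℝ v y = a} = ∅ := by
  obtain ⟨R, hR⟩ := (hK (Classical.arbitrary ι)).isBounded.subset_closedBall 0
  have hpos : ∀ p ∈ sphere (0 : E) 1 ×ˢ Set.Icc (-(R + 1)) (R + 1),
      ∃ i, ∀ y ∈ K i, 0 < |inner ℝ p.1 y - p.2| := by
    rintro ⟨u, a⟩ ⟨hu, -⟩
    obtain ⟨i, hi⟩ := h u (ne_zero_of_mem_unit_sphere ⟨u, hu⟩) a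
    exact ⟨i, fun y hy => abs_pos.2 <| sub_ne_zero.2 fun hya => hi.subset ⟨hy, hya⟩⟩
  obtain ⟨c, hc, hcS⟩ :=
    ((isCompact_sphere 0 1).prod isCompact_Icc).exists_pos_forall_exists_forall_lt hK
      (f := fun p y => |inner ℝ p.1 y - p.2|) (by fun_prop) hpos
  refine ⟨min c 1, by positivity, fun v hv a => ?_⟩
  rw [hyperplane_eq_normalize hv]
  set u := ‖v‖⁻¹ • v
  set b := ‖v‖⁻¹ * a
  have hu : ‖u‖ = 1 := norm_smul_inv_norm hv
  by_cases hb : |b| ≤ R + 1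
  · obtain ⟨i, hi⟩ := hcS (u, b) ⟨mem_sphere_zero_iff_norm.2 hu, abs_le.1 hb⟩
    exact ⟨i, inter_thickening_hyperplane_eq_empty hu.le fun y hy =>
      (min_le_left _ _).trans (hi y hy).le⟩
  · refine ⟨Classical.arbitrary ι, inter_thickening_hyperplane_eq_empty hu.le fun y hy => ?_⟩
    have hyR : |inner ℝ u y| ≤ R :=
      calc |inner ℝ u y| ≤ ‖u‖ * ‖y‖ := abs_real_inner_le_norm _ _
        _ ≤ R := by simpa [hu] using hR hy
    have := abs_sub_abs_le_abs_sub b (inner ℝ u y)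
    rw [abs_sub_comm] at this
    linarith [min_le_right c 1]

end Hyperplane

theorem diffuse_iff_misses_hyperplanes_general
    {d : ℕ} {Λ : Type*} [Nonempty Λ]
    (φ : Λ → EuclideanSpace ℝ (Fin d) → EuclideanSpace ℝ (Fin d))
    (r : Λ → ℝ)
    (hsim : ∀ i x y, dist (φ i x) (φ i y) = r i * dist x y)
    (F : Set (EuclideanSpace ℝ (Fin d))) (hFc : IsCompact F) :
    (∃ c : ℝ, 0 < c ∧ ∀ v : EuclideanSpace ℝ (Fin d), v ≠ 0 → ∀ a : ℝ,
        ∃ i : Λ, (φ i '' F) ∩ thickening c {y | inner ℝ v y = (a : ℝ)} = ∅) ↔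
      (∀ v : EuclideanSpace ℝ (Fin d), v ≠ 0 → ∀ a : ℝ,
        ∃ i : Λ, (φ i '' F) ∩ {y | inner ℝ v y = (a : ℝ)} = ∅) := by
  refine ⟨fun ⟨c, hc, h⟩ v hv a => ?_, fun h => ?_⟩
  · obtain ⟨i, hi⟩ := h v hv a
    exact ⟨i, Set.subset_empty_iff.1 <|
      hi ▸ Set.inter_subset_inter_right _ (self_subset_thickening hc _)⟩
  · exact exists_pos_forall_exists_inter_thickening_hyperplane_eq_empty
      (fun i => hFc.image (continuous_of_forall_dist_eq_mul (hsim i))) h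

/-- Let `Φ = {φ_i}` be a finite similarity IFS on `ℝᵈ` and `F` a nonempty compact set with
`φ_i(F) ⊆ F` for all `i`. Then `Φ` is `(F,c)`-diffuse for some `c > 0` iff for every affine
hyperplane `ℒ` there is some `i` with `φ_i(F) ∩ ℒ = ∅`. -/
theorem diffuse_iff_misses_hyperplanes
    {d : ℕ} {Λ : Type*} [Fintype Λ] [Nonempty Λ]
    (φ : Λ → EuclideanSpace ℝ (Fin d) → EuclideanSpace ℝ (Fin d))
    (r : Λ → ℝ) (hr : ∀ i, r i ∈ Set.Ioo (0:ℝ) 1)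
    (hsim : ∀ i x y, dist (φ i x) (φ i y) = r i * dist x y)
    (F : Set (EuclideanSpace ℝ (Fin d))) (hFc : IsCompact F) (hFne : F.Nonempty)
    (hF : ∀ i, φ i '' F ⊆ F) :
    (∃ c : ℝ, 0 < c ∧ ∀ v : EuclideanSpace ℝ (Fin d), v ≠ 0 → ∀ a : ℝ,
        ∃ i : Λ, (φ i '' F) ∩ thickening c {y | inner ℝ v y = (a : ℝ)} = ∅) ↔
      (∀ v : EuclideanSpace ℝ (Fin d), v ≠ 0 → ∀ a : ℝ,
        ∃ i : Λ, (φ i '' F) ∩ {y | inner ℝ v y = (a : ℝ)} = ∅) :=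
  diffuse_iff_misses_hyperplanes_general φ r hsim F hFc
end
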